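/- Stopping condition for Exact λ Policy Iteration: run λ Policy Iteration with no error (ε_k = 0 for all k). If at some iteration k₀ the value v_{k₀} satisfies spn_∞(T v_{k₀} − v_{k₀}) < ((1−γ)/γ)·ε, then the greedy policy π_{k₀+1} with respect to v_{k₀} is ε-optimal: ‖v_* − v^{π_{k₀+1}}‖_∞ < ε. -/

import Mathlib

open Matrix Filter Finset

section MDPDefs

variable {X : Type*} {A : Type*} [Fintype X] [Nonempty X] [DecidableEq X]
  [Fintype A] [Nonempty A]

/-- Transition matrix of a policy: `P^π i j = p i (π i) j`. -/
noncomputable def Pmat (p : X → A → X → ℝ) (π : X → A) : Matrix X X ℝ :=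
  Matrix.of fun i j => p i (π i) j

/-- Expected reward vector of a policy. -/
noncomputable def rvec (p : X → A → X → ℝ) (r : X → A → X → ℝ) (π : X → A) : X → ℝ :=
  fun i => ∑ j, p i (π i) j * r i (π i) j

/-- The Bellman operator of a policy: `T^π v = r^π + γ P^π v`. -/
noncomputable def Tpol (p : X → A → X → ℝ) (r : X → A → X → ℝ) (γ : ℝ)
    (π : X → A) (v : X → ℝ) : X → ℝ :=
  rvec p r π + γ • (Pmat p π).mulVec v

/-- The optimal Bellman operator: `(T v) i = max_a Σ_j p i a j (r i a j + γ v j)`. -/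
noncomputable def Topt (p : X → A → X → ℝ) (r : X → A → X → ℝ) (γ : ℝ)
    (v : X → ℝ) : X → ℝ :=
  fun i => Finset.univ.sup' Finset.univ_nonempty
    (fun a => ∑ j, p i a j * (r i a j + γ * v j))

/-- A policy is greedy with respect to `v` when `T^π v = T v`. -/
def Greedy (p : X → A → X → ℝ) (r : X → A → X → ℝ) (γ : ℝ)
    (π : X → A) (v : X → ℝ) : Prop :=
  Tpol p r γ π v = Topt p r γ v

/-- The value of a policy: `v^π = (I - γ P^π)⁻¹ r^π`. -/
noncomputable def vpi (p : X → A → X → ℝ) (r : X → A → X → ℝ) (γ : ℝ)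
    (π : X → A) : X → ℝ :=
  ((1 : Matrix X X ℝ) - γ • Pmat p π)⁻¹.mulVec (rvec p r π)

/-- The λ policy iteration update operator
`T_λ^π v = (I - λγ P^π)⁻¹ (r^π + (1-λ)γ P^π v)`. -/
noncomputable def Tlam (p : X → A → X → ℝ) (r : X → A → X → ℝ) (γ lam : ℝ)
    (π : X → A) (v : X → ℝ) : X → ℝ :=
  ((1 : Matrix X X ℝ) - (lam * γ) • Pmat p π)⁻¹.mulVec
    (rvec p r π + ((1 - lam) * γ) • (Pmat p π).mulVec v)

/-- A stochastic matrix: nonnegative entries, all row sums equal to one. -/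
def IsStochastic (M : Matrix X X ℝ) : Prop :=
  (∀ i j, 0 ≤ M i j) ∧ ∀ i, ∑ j, M i j = 1

/-- A probability distribution on `X`. -/
def IsDistribution (μ : X → ℝ) : Prop :=
  (∀ x, 0 ≤ μ x) ∧ ∑ x, μ x = 1

/-- Weighted L_p norm `‖u‖_{p,μ} = (Σ_x μ x |u x|^p)^(1/p)`. -/
noncomputable def wLpNorm (pp : ℝ) (μ : X → ℝ) (u : X → ℝ) : ℝ :=
  (∑ x, μ x * |u x| ^ pp) ^ (1 / pp)

/-- Max norm `‖u‖_∞ = max_x |u x|`. -/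
noncomputable def linfNorm (u : X → ℝ) : ℝ :=
  Finset.univ.sup' Finset.univ_nonempty fun x => |u x|

/-- Span seminorm `spn_∞ u = max_x u x - min_x u x`. -/
noncomputable def spanInf (u : X → ℝ) : ℝ :=
  (Finset.univ.sup' Finset.univ_nonempty u) - (Finset.univ.inf' Finset.univ_nonempty u)

/-- Span seminorm `spn_{p,μ} u = 2 min_a ‖u - a e‖_{p,μ}`. -/
noncomputable def spanLp (pp : ℝ) (μ : X → ℝ) (u : X → ℝ) : ℝ :=
  2 * ⨅ a : ℝ, wLpNorm pp μ (fun x => u x - a)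

/-- Componentwise limsup of a sequence of vectors. -/
noncomputable def limsupVec (f : ℕ → X → ℝ) : X → ℝ :=
  fun x => Filter.atTop.limsup fun k => f k x

/-- The product `M k * M (k-1) * ⋯ * M (j+1)` (identity when `k ≤ j`). -/
noncomputable def descProd (M : ℕ → Matrix X X ℝ) (j k : ℕ) : Matrix X X ℝ :=
  ((List.range (k - j)).map fun t => M (k - t)).prod

/-- The mixture distribution `½ μ (M + M')` (as a row vector pushed through matrices). -/
noncomputable def mixDist (μ : X → ℝ) (M M' : Matrix X X ℝ) : X → ℝ :=
  Matrix.vecMul μ (((1 : ℝ) / 2) • (M + M'))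

/-- Concentration coefficient `C(ν) = max_{i,a,j} p i a j / ν j`. -/
noncomputable def concCoef (p : X → A → X → ℝ) (ν : X → ℝ) : ℝ :=
  Finset.univ.sup' Finset.univ_nonempty
    (fun x : X × A × X => p x.1 x.2.1 x.2.2 / ν x.2.2)

/-- `β = (1-λ)γ/(1-λγ)`. -/
noncomputable def betaF (γ lam : ℝ) : ℝ := (1 - lam) * γ / (1 - lam * γ)

/-- `A_k = (1-λγ)(I - λγ P_k)⁻¹ P_k`. -/
noncomputable def Amat (p : X → A → X → ℝ) (γ lam : ℝ) (π : X → A) : Matrix X X ℝ :=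
  (1 - lam * γ) • (((1 : Matrix X X ℝ) - (lam * γ) • Pmat p π)⁻¹ * Pmat p π)

/-- `B_{jk}` (also `E'_{k k₀}` with `k₀ = j`). -/
noncomputable def Bmat (p : X → A → X → ℝ) (γ lam : ℝ) (π : ℕ → X → A) (πs : X → A)
    (j k : ℕ) : Matrix X X ℝ :=
  ((1 - γ) / γ ^ (k - j)) • (
    (lam * γ / (1 - lam * γ)) •
      (∑ i ∈ Finset.Ico j k, (γ ^ (k - 1 - i) * betaF γ lam ^ (i - j)) •
        ((Pmat p πs) ^ (k - 1 - i) * descProd (fun l => Amat p γ lam (π l)) j (i + 1)))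
    + (betaF γ lam ^ (k - j)) •
      (((1 : Matrix X X ℝ) - γ • Pmat p (π k))⁻¹ *
        descProd (fun l => Amat p γ lam (π l)) j k))

/-- `B'_{jk} = γ B_{jk} P_j + (1-γ)(P_*)^{k-j}`. -/
noncomputable def Bmat' (p : X → A → X → ℝ) (γ lam : ℝ) (π : ℕ → X → A) (πs : X → A)
    (j k : ℕ) : Matrix X X ℝ :=
  γ • (Bmat p γ lam π πs j k * Pmat p (π j)) + (1 - γ) • (Pmat p πs) ^ (k - j)

/-- `E_{k k₀} = (1-γ)(P_*)^{k-k₀}(I-γP_*)⁻¹`. -/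
noncomputable def Emat (p : X → A → X → ℝ) (γ : ℝ) (πs : X → A) (k0 k : ℕ) :
    Matrix X X ℝ :=
  (1 - γ) • ((Pmat p πs) ^ (k - k0) * ((1 : Matrix X X ℝ) - γ • Pmat p πs)⁻¹)

/-- `F_{k k₀} = (1-γ)(P_*)^{k-k₀} + γ E'_{k k₀} P_*`. -/
noncomputable def Fmat (p : X → A → X → ℝ) (γ lam : ℝ) (π : ℕ → X → A) (πs : X → A)
    (k0 k : ℕ) : Matrix X X ℝ :=
  (1 - γ) • (Pmat p πs) ^ (k - k0) + γ • (Bmat p γ lam π πs k0 k * Pmat p πs)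

/-- `(1-γ)²(I-γP_{πs})⁻¹ (P_{πa} (I-γP_{πb})⁻¹)`; this gives `C_k` and `C'_k`. -/
noncomputable def Cmat (p : X → A → X → ℝ) (γ : ℝ) (πs πa πb : X → A) :
    Matrix X X ℝ :=
  (1 - γ) ^ 2 • (((1 : Matrix X X ℝ) - γ • Pmat p πs)⁻¹ *
    (Pmat p πa * ((1 : Matrix X X ℝ) - γ • Pmat p πb)⁻¹))

/-- `D = (1-γ) P (I-γP)⁻¹`. -/
noncomputable def Dmat (p : X → A → X → ℝ) (γ : ℝ) (π : X → A) : Matrix X X ℝ :=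
  (1 - γ) • (Pmat p π * ((1 : Matrix X X ℝ) - γ • Pmat p π)⁻¹)

end MDPDefs

/-!
Let `w = v_{k₀}`, `d = T w - w` and `π'` greedy for `w`. With an
optimal policy `π_*`, `u₁ = v_* - w` satisfies `u₁ ≤ d + γ P^{π_*} u₁` and `u₂ = v^{π'} - w`
satisfies `u₂ = d + γ P^{π'} u₂`; since `γ P` is a contraction for stochastic `P`, this gives
`u₁ ≤ max d / (1-γ)` and `u₂ ≥ min d / (1-γ)`. Subtracting the two relations once more cancels
`d`, so `v_* - v^{π'} = u₁ - u₂ ≤ γ/(1-γ) · spn_∞(d)`, and `0 ≤ v_* - v^{π'}` always holds.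
-/

namespace IsStochastic

variable {X : Type*} [Fintype X] {P : Matrix X X ℝ}

lemma mulVec_le (hP : IsStochastic P) {u : X → ℝ} {c : ℝ} (hu : ∀ j, u j ≤ c) (i : X) :
    (P *ᵥ u) i ≤ c :=
  calc (P *ᵥ u) i = ∑ j, P i j * u j := rfl
    _ ≤ ∑ j, P i j * c := sum_le_sum fun j _ => mul_le_mul_of_nonneg_left (hu j) (hP.1 i j)
    _ = c := by rw [← sum_mul, hP.2 i, one_mul]

lemma le_mulVec (hP : IsStochastic P) {u : X → ℝ} {c : ℝ} (hu : ∀ j, c ≤ u j) (i : X) :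
    c ≤ (P *ᵥ u) i := by
  have := hP.mulVec_le (u := -u) (c := -c) (fun j => neg_le_neg (hu j)) i
  rwa [mulVec_neg, Pi.neg_apply, neg_le_neg_iff] at this

lemma le_div_of_le_add_mulVec (hP : IsStochastic P) {γ δ : ℝ} (hγ0 : 0 ≤ γ) (hγ1 : γ < 1)
    {u : X → ℝ} (hu : ∀ i, u i ≤ δ + γ * (P *ᵥ u) i) (i : X) : u i ≤ δ / (1 - γ) := by
  have : Nonempty X := ⟨i⟩
  obtain ⟨j, hj⟩ := Finite.exists_max u
  have hmax : u j ≤ δ + γ * u j := (hu j).trans (by gcongr; exact hP.mulVec_le hj j)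
  rw [le_div_iff₀ (by linarith)]
  calc u i * (1 - γ) ≤ u j * (1 - γ) := mul_le_mul_of_nonneg_right (hj i) (by linarith)
    _ ≤ δ := by linarith

lemma div_le_of_add_mulVec_le (hP : IsStochastic P) {γ δ : ℝ} (hγ0 : 0 ≤ γ) (hγ1 : γ < 1)
    {u : X → ℝ} (hu : ∀ i, δ + γ * (P *ᵥ u) i ≤ u i) (i : X) : δ / (1 - γ) ≤ u i := by
  have hneg : ∀ i, (-u) i ≤ -δ + γ * (P *ᵥ -u) i := fun i => by
    simp only [mulVec_neg, Pi.neg_apply]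
    linarith [hu i]
  have := hP.le_div_of_le_add_mulVec hγ0 hγ1 hneg i
  rw [Pi.neg_apply, neg_div] at this
  linarith

lemma isUnit_det_one_sub_smul [DecidableEq X] (hP : IsStochastic P) {γ : ℝ} (hγ0 : 0 ≤ γ)
    (hγ1 : γ < 1) : IsUnit (1 - γ • P).det := by
  rw [isUnit_iff_ne_zero, ne_eq, ← exists_mulVec_eq_zero_iff]
  rintro ⟨z, hz0, hz⟩
  have hz_eq : ∀ i, z i = γ * (P *ᵥ z) i := fun i => by
    have := congrFun hz i
    simp only [sub_mulVec, one_mulVec, smul_mulVec, Pi.sub_apply, Pi.smul_apply,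
      smul_eq_mul, Pi.zero_apply] at this
    linarith
  refine hz0 (funext fun i => le_antisymm ?_ ?_)
  · simpa using hP.le_div_of_le_add_mulVec (δ := 0) hγ0 hγ1 (fun i => by simp [← hz_eq i]) i
  · simpa using hP.div_le_of_add_mulVec_le (δ := 0) hγ0 hγ1 (fun i => by simp [← hz_eq i]) i

end IsStochastic

section MDP

variable {X A : Type*} [Fintype X] (p : X → A → X → ℝ) (r : X → A → X → ℝ) (γ : ℝ)

lemma Pmat_isStochastic (hp0 : ∀ i a j, 0 ≤ p i a j) (hp1 : ∀ i a, ∑ j, p i a j = 1)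
    (π : X → A) : IsStochastic (Pmat p π) :=
  ⟨fun i j => hp0 i (π i) j, fun i => hp1 i (π i)⟩

lemma Tpol_apply (π : X → A) (v : X → ℝ) (i : X) :
    Tpol p r γ π v i = ∑ j, p i (π i) j * (r i (π i) j + γ * v j) := by
  simp only [Tpol, rvec, Pi.add_apply, Pi.smul_apply, smul_eq_mul, mulVec, dotProduct, Pmat,
    of_apply, mul_sum, ← sum_add_distrib]
  exact sum_congr rfl fun j _ => by ring

lemma Tpol_apply_eq_add (π : X → A) (u v : X → ℝ) (i : X) :
    Tpol p r γ π u i = Tpol p r γ π v i + γ * (Pmat p π *ᵥ (u - v)) i := by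
  simp only [Tpol, Pi.add_apply, Pi.smul_apply, smul_eq_mul, mulVec_sub, Pi.sub_apply]
  ring

lemma Tpol_vpi [DecidableEq X] (hp0 : ∀ i a j, 0 ≤ p i a j) (hp1 : ∀ i a, ∑ j, p i a j = 1)
    (hγ0 : 0 ≤ γ) (hγ1 : γ < 1) (π : X → A) : Tpol p r γ π (vpi p r γ π) = vpi p r γ π := by
  have hdet := (Pmat_isStochastic p hp0 hp1 π).isUnit_det_one_sub_smul hγ0 hγ1
  have hsolve : (1 - γ • Pmat p π) *ᵥ vpi p r γ π = rvec p r π := by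
    rw [vpi, mulVec_mulVec, mul_nonsing_inv _ hdet, one_mulVec]
  rw [sub_mulVec, one_mulVec, smul_mulVec, sub_eq_iff_eq_add] at hsolve
  exact hsolve.symm

variable [Fintype A] [Nonempty A]

lemma Tpol_le_Topt (π : X → A) (v : X → ℝ) (i : X) : Tpol p r γ π v i ≤ Topt p r γ v i := by
  rw [Tpol_apply]
  exact le_sup' (fun a => ∑ j, p i a j * (r i a j + γ * v j)) (mem_univ (π i))

lemma exists_greedy (v : X → ℝ) : ∃ π, Greedy p r γ π v := by
  choose π hπ using fun i => exists_mem_eq_sup' univ_nonempty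
    (fun a => ∑ j, p i a j * (r i a j + γ * v j))
  exact ⟨π, funext fun i => by rw [Tpol_apply, ← (hπ i).2]; rfl⟩

variable [DecidableEq X] {p}

lemma vpi_le_of_Topt_eq (hp0 : ∀ i a j, 0 ≤ p i a j) (hp1 : ∀ i a, ∑ j, p i a j = 1)
    (hγ0 : 0 ≤ γ) (hγ1 : γ < 1) {vstar : X → ℝ} (hfix : Topt p r γ vstar = vstar)
    (π : X → A) (i : X) : vpi p r γ π i ≤ vstar i := by
  set u := vpi p r γ π - vstar
  have hrel : ∀ i, u i ≤ 0 + γ * (Pmat p π *ᵥ u) i := fun i => by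
    have := Tpol_apply_eq_add p r γ π (vpi p r γ π) vstar i
    rw [congrFun (Tpol_vpi p r γ hp0 hp1 hγ0 hγ1 π) i] at this
    have := Tpol_le_Topt p r γ π vstar i
    rw [congrFun hfix i] at this
    simp only [u, Pi.sub_apply]
    linarith
  have := (Pmat_isStochastic p hp0 hp1 π).le_div_of_le_add_mulVec hγ0 hγ1 hrel i
  exact sub_nonpos.1 (by simpa [u] using this)

lemma sub_vpi_le_of_greedy [Nonempty X] (hp0 : ∀ i a j, 0 ≤ p i a j)
    (hp1 : ∀ i a, ∑ j, p i a j = 1) (hγ0 : 0 ≤ γ) (hγ1 : γ < 1) {vstar : X → ℝ}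
    (hfix : Topt p r γ vstar = vstar) {π : X → A} {w : X → ℝ} (hgr : Greedy p r γ π w)
    (i : X) : vstar i - vpi p r γ π i ≤ γ / (1 - γ) * spanInf (Topt p r γ w - w) := by
  obtain ⟨πs, hπs⟩ := exists_greedy p r γ vstar
  set d := Topt p r γ w - w
  set δ := univ.sup' univ_nonempty d
  set δ' := univ.inf' univ_nonempty d
  set u₁ := vstar - w
  set u₂ := vpi p r γ π - w
  have hrel₁ : ∀ i, u₁ i ≤ d i + γ * (Pmat p πs *ᵥ u₁) i := fun i => by
    have := Tpol_apply_eq_add p r γ πs vstar w i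
    rw [congrFun hπs i, congrFun hfix i] at this
    have := Tpol_le_Topt p r γ πs w i
    simp only [u₁, d, Pi.sub_apply]
    linarith
  have hrel₂ : ∀ i, u₂ i = d i + γ * (Pmat p π *ᵥ u₂) i := fun i => by
    have := Tpol_apply_eq_add p r γ π (vpi p r γ π) w i
    rw [congrFun (Tpol_vpi p r γ hp0 hp1 hγ0 hγ1 π) i, congrFun hgr i] at this
    simp only [u₂, d, Pi.sub_apply]
    linarith
  have hd_le : ∀ j, d j ≤ δ := fun j => le_sup' d (mem_univ j)
  have hd_ge : ∀ j, δ' ≤ d j := fun j => inf'_le d (mem_univ j)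
  have hu₁ : ∀ j, u₁ j ≤ δ / (1 - γ) :=
    (Pmat_isStochastic p hp0 hp1 πs).le_div_of_le_add_mulVec hγ0 hγ1
      fun j => by linarith [hrel₁ j, hd_le j]
  have hu₂ : ∀ j, δ' / (1 - γ) ≤ u₂ j :=
    (Pmat_isStochastic p hp0 hp1 π).div_le_of_add_mulVec_le hγ0 hγ1
      fun j => by linarith [hrel₂ j, hd_ge j]
  have hPu₁ := mul_le_mul_of_nonneg_left ((Pmat_isStochastic p hp0 hp1 πs).mulVec_le hu₁ i) hγ0
  have hPu₂ := mul_le_mul_of_nonneg_left ((Pmat_isStochastic p hp0 hp1 π).le_mulVec hu₂ i) hγ0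
  calc vstar i - vpi p r γ π i = u₁ i - u₂ i := by simp [u₁, u₂]
    _ ≤ γ * (δ / (1 - γ)) - γ * (δ' / (1 - γ)) := by linarith [hrel₁ i, hrel₂ i]
    _ = γ / (1 - γ) * spanInf d := by rw [spanInf]; ring

end MDP

theorem exact_lambda_PI_stopping_general
    {X A : Type*} [Fintype X] [Nonempty X] [DecidableEq X] [Fintype A] [Nonempty A]
    (p : X → A → X → ℝ) (r : X → A → X → ℝ) (γ : ℝ)
    (hp0 : ∀ i a j, 0 ≤ p i a j) (hp1 : ∀ i a, ∑ j, p i a j = 1)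
    (hγ0 : 0 < γ) (hγ1 : γ < 1)
    (vstar : X → ℝ) (hfix : Topt p r γ vstar = vstar)
    -- exact λ policy iteration (no error)
    (v : ℕ → X → ℝ) (π : ℕ → X → A)
    (hgreedy : ∀ k, Greedy p r γ (π (k + 1)) (v k))
    (k0 : ℕ) (ε : ℝ)
    (hstop : spanInf (Topt p r γ (v k0) - v k0) < (1 - γ) / γ * ε) :
    linfNorm (vstar - vpi p r γ (π (k0 + 1))) < ε := by
  have hbound := sub_vpi_le_of_greedy r γ hp0 hp1 hγ0.le hγ1 hfix (hgreedy k0)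
  have h1γ : 0 < 1 - γ := sub_pos.2 hγ1
  have hcoef : γ / (1 - γ) * spanInf (Topt p r γ (v k0) - v k0) < ε :=
    calc _ < γ / (1 - γ) * ((1 - γ) / γ * ε) := by gcongr
      _ = ε := by field_simp [h1γ.ne']
  have hnonneg := vpi_le_of_Topt_eq r γ hp0 hp1 hγ0.le hγ1 hfix (π (k0 + 1))
  rw [linfNorm, sup'_lt_iff]
  intro i _
  rw [Pi.sub_apply, abs_of_nonneg (sub_nonneg.2 (hnonneg i))]
  exact (hbound i).trans_lt hcoef

/-- Stopping condition for Exact λ Policy Iteration. -/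
theorem exact_lambda_PI_stopping
    {X A : Type*} [Fintype X] [Nonempty X] [DecidableEq X] [Fintype A] [Nonempty A]
    (p : X → A → X → ℝ) (r : X → A → X → ℝ) (γ lam : ℝ)
    (hp0 : ∀ i a j, 0 ≤ p i a j) (hp1 : ∀ i a, ∑ j, p i a j = 1)
    (hγ0 : 0 < γ) (hγ1 : γ < 1) (hlam0 : 0 ≤ lam) (hlam1 : lam ≤ 1)
    (vstar : X → ℝ) (hfix : Topt p r γ vstar = vstar)
    -- exact λ policy iteration (no error)
    (v : ℕ → X → ℝ) (π : ℕ → X → A)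
    (hgreedy : ∀ k, Greedy p r γ (π (k + 1)) (v k))
    (hupd : ∀ k, v (k + 1) = Tlam p r γ lam (π (k + 1)) (v k))
    (k0 : ℕ) (ε : ℝ)
    (hstop : spanInf (Topt p r γ (v k0) - v k0) < (1 - γ) / γ * ε) :
    linfNorm (vstar - vpi p r γ (π (k0 + 1))) < ε :=
  exact_lambda_PI_stopping_general p r γ hp0 hp1 hγ0 hγ1 vstar hfix v π hgreedy k0 ε hstop
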